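/- arXiv:2209.08586 — 3 statements merged into one kernel-verified Lean document; each statement's English description precedes it below -/
import Mathlib

section
/- Let {X_n, n≥1} be a sequence of mutually independent random variables with common mean μ = E(X_k) and satisfying the moment condition (2) with exponent α ∈ (0,1) and ν_α = sup_n E|X_n|^{1+α} < ∞. Let δ ∈ (0,1), a_1 = √(3cν_α), and a_2 = 2(c_α ν_α)^{1/(1+α)}, where c_α is a positive constant (independent of n and b) such that E|Σ_{k=1}^n Z_k(b)|^{1+α} ≤ 2^{1+α} c_α ν_α n for all n≥1 and b>0. Then there exist constants c_0 > 0 and n_0 (depending on δ) such that for every c ≥ c_0 and every n ≥ n_0, with probability at least 1 − δ/2 − (2 log(1/δ))^{-α}, |n^{-1} Σ_{k=1}^n X_k − μ| < (a_1 + a_2) (2 log(1/δ)/n)^{α/(1+α)}. -/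
open MeasureTheory ProbabilityTheory Finset

noncomputable def tailPart {Ω : Type*} [MeasurableSpace Ω] (μ : Measure Ω)
    (X : ℕ → Ω → ℝ) (b : ℝ) (k : ℕ) (ω : Ω) : ℝ :=
  (if b < |X k ω| then X k ω else 0) - ∫ ω', (if b < |X k ω'| then X k ω' else 0) ∂μ

/-!
Split `X k - μ₀` at the level `b = (n / L) ^ (1 / (1 + α))`, `L = 2 log (1 / δ)`, into a centred
bounded part and the centred tail `tailPart`. By independence the bounded parts have summed
variance at most `n b ^ (1 - α) ν_α`, so by Chebyshev their sum exceeds `√(3 c ν_α) n ε`,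
`ε = (L / n) ^ (α / (1 + α))`, with probability at most `1 / (3 c L) ≤ δ / 2` once
`c ≥ 2 / (3 L δ)`. By Markov and the `(1 + α)`-th moment bound on the summed tails, these exceed
`a₂ n ε` with probability at most `L ^ (-α)`.
-/

-- Unlike `ProbabilityTheory.truncation`, which keeps `(-b, b]`, this keeps `[-b, b]`: the exact
-- complement of the tail kept by `tailPart`.
noncomputable def cutoff (b x : ℝ) : ℝ := if |x| ≤ b then x else 0

section Truncation

variable {b x : ℝ}

lemma abs_cutoff_le : |cutoff b x| ≤ |b| := by
  unfold cutoff
  split_ifs with h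
  · exact h.trans (le_abs_self b)
  · simp

lemma ite_lt_abs_eq_sub_cutoff : (if b < |x| then x else 0) = x - cutoff b x := by
  unfold cutoff
  split_ifs with h₁ h₂ h₂
  · exact absurd h₂ (not_le.2 h₁)
  · exact (sub_zero x).symm
  · exact (sub_self x).symm
  · exact absurd (not_lt.1 h₁) h₂

lemma measurable_cutoff : Measurable (cutoff b) :=
  Measurable.ite (measurableSet_le measurable_abs measurable_const) measurable_id measurable_const

lemma sq_cutoff_le {p : ℝ} (hp : p ≤ 2) (hb : 0 ≤ b) :
    cutoff b x ^ 2 ≤ b ^ (2 - p) * |x| ^ p := by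
  unfold cutoff
  split_ifs with h
  · calc x ^ 2 = |x| ^ (2 - p) * |x| ^ p := by
          rw [← Real.rpow_add' (abs_nonneg x) (by norm_num), sub_add_cancel,
            Real.rpow_two, sq_abs]
      _ ≤ b ^ (2 - p) * |x| ^ p := by gcongr
  · simp only [ne_eq, OfNat.ofNat_ne_zero, not_false_eq_true, zero_pow]
    positivity

end Truncation

section Probability

variable {Ω : Type*} [MeasurableSpace Ω] {μ : Measure Ω} {p : ℝ}

lemma memLp_ofReal_iff_integrable_abs_rpow {Y : Ω → ℝ} (hY : AEStronglyMeasurable Y μ)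
    (hp : 0 < p) : MemLp Y (ENNReal.ofReal p) μ ↔ Integrable (fun ω => |Y ω| ^ p) μ := by
  rw [← integrable_norm_rpow_iff hY (by simpa using hp) ENNReal.ofReal_ne_top,
    ENNReal.toReal_ofReal hp.le]
  simp only [Real.norm_eq_abs]

lemma measureReal_ge_le_variance_div_sq [IsFiniteMeasure μ] {Y : Ω → ℝ} (hY : MemLp Y 2 μ)
    {t : ℝ} (ht : 0 < t) : μ.real {ω | t ≤ |Y ω - μ[Y]|} ≤ variance Y μ / t ^ 2 :=
  ENNReal.toReal_le_of_le_ofReal (by have := variance_nonneg Y μ; positivity)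
    (meas_ge_le_variance_div_sq hY ht)

lemma measureReal_ge_le_integral_abs_rpow_div {Y : Ω → ℝ}
    (hY : Integrable (fun ω => |Y ω| ^ p) μ) (hp : 0 < p) {t : ℝ} (ht : 0 < t) :
    μ.real {ω | t ≤ |Y ω|} ≤ (∫ ω, |Y ω| ^ p ∂μ) / t ^ p := by
  have hevent : {ω | t ≤ |Y ω|} = {ω | t ^ p ≤ |Y ω| ^ p} := by
    ext ω
    exact (Real.rpow_le_rpow_iff ht.le (abs_nonneg _) hp).symm
  rw [hevent, le_div_iff₀ (by positivity), mul_comm]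
  exact mul_meas_ge_le_integral_of_nonneg (.of_forall fun ω => by positivity) hY _

lemma variance_cutoff_le [IsProbabilityMeasure μ] {Y : Ω → ℝ} (hY : AEMeasurable Y μ)
    {b : ℝ} (hb : 0 ≤ b) (hp : p ≤ 2) (hint : Integrable (fun ω => |Y ω| ^ p) μ) :
    variance (fun ω => cutoff b (Y ω)) μ ≤ b ^ (2 - p) * ∫ ω, |Y ω| ^ p ∂μ := by
  calc variance (fun ω => cutoff b (Y ω)) μ
      ≤ ∫ ω, cutoff b (Y ω) ^ 2 ∂μ :=
        variance_le_expectation_sq (X := fun ω => cutoff b (Y ω))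
          (measurable_cutoff.comp_aemeasurable hY).aestronglyMeasurable
    _ ≤ ∫ ω, b ^ (2 - p) * |Y ω| ^ p ∂μ :=
        integral_mono_of_nonneg (.of_forall fun ω => sq_nonneg _) (hint.const_mul _)
          (.of_forall fun ω => sq_cutoff_le hp hb)
    _ = b ^ (2 - p) * ∫ ω, |Y ω| ^ p ∂μ := integral_const_mul _ _

lemma memLp_cutoff [IsFiniteMeasure μ] {Y : Ω → ℝ} (hY : AEMeasurable Y μ) (b : ℝ)
    (q : ENNReal) : MemLp (fun ω => cutoff b (Y ω)) q μ :=
  .of_bound (measurable_cutoff.comp_aemeasurable hY).aestronglyMeasurable |b|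
    (.of_forall fun _ => abs_cutoff_le)

lemma variance_sum_cutoff_le [IsProbabilityMeasure μ] {ι : Type*} {X : ι → Ω → ℝ}
    (hmeas : ∀ i, AEMeasurable (X i) μ) (hindep : iIndepFun X μ) {s : Finset ι} {b ν : ℝ}
    (hb : 0 ≤ b) (hp : p ≤ 2) (hint : ∀ i ∈ s, Integrable (fun ω => |X i ω| ^ p) μ)
    (hν : ∀ i ∈ s, ∫ ω, |X i ω| ^ p ∂μ ≤ ν) :
    variance (fun ω => ∑ i ∈ s, cutoff b (X i ω)) μ ≤ #s * (b ^ (2 - p) * ν) := by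
  have hpairwise : Set.Pairwise s fun i j =>
      IndepFun (fun ω => cutoff b (X i ω)) (fun ω => cutoff b (X j ω)) μ :=
    fun i _ j _ hij => (hindep.comp _ fun _ => measurable_cutoff).indepFun hij
  have hsum : (fun ω => ∑ i ∈ s, cutoff b (X i ω)) = ∑ i ∈ s, fun ω => cutoff b (X i ω) := by
    ext ω
    simp
  rw [hsum, IndepFun.variance_sum (fun i _ => memLp_cutoff (hmeas i) b 2) hpairwise]
  calc ∑ i ∈ s, variance (fun ω => cutoff b (X i ω)) μ
      ≤ ∑ i ∈ s, b ^ (2 - p) * ν := sum_le_sum fun i hi =>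
        (variance_cutoff_le (hmeas i) hb hp (hint i hi)).trans
          (mul_le_mul_of_nonneg_left (hν i hi) (by positivity))
    _ = #s * (b ^ (2 - p) * ν) := by simp

lemma sub_integral_eq_cutoff_add_tailPart [IsFiniteMeasure μ] {X : ℕ → Ω → ℝ} {k : ℕ}
    (hX : Integrable (X k) μ) (b : ℝ) (ω : Ω) :
    X k ω - ∫ ω', X k ω' ∂μ =
      (cutoff b (X k ω) - ∫ ω', cutoff b (X k ω') ∂μ) + tailPart μ X b k ω := by
  have htail : ∫ ω', (if b < |X k ω'| then X k ω' else 0) ∂μ =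
      ∫ ω', X k ω' ∂μ - ∫ ω', cutoff b (X k ω') ∂μ := by
    simp_rw [ite_lt_abs_eq_sub_cutoff]
    exact integral_sub hX ((memLp_cutoff hX.aemeasurable b 1).integrable le_rfl)
  rw [tailPart, htail, ite_lt_abs_eq_sub_cutoff]
  ring

lemma memLp_tailPart [IsFiniteMeasure μ] {X : ℕ → Ω → ℝ} {k : ℕ} {q : ENNReal}
    (hX : MemLp (X k) q μ) (b : ℝ) : MemLp (tailPart μ X b k) q μ := by
  unfold tailPart
  simp_rw [ite_lt_abs_eq_sub_cutoff]
  exact (hX.sub (memLp_cutoff hX.aestronglyMeasurable.aemeasurable b q)).sub (memLp_const _)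

lemma sum_sub_card_mul_eq_add_sum_tailPart [IsFiniteMeasure μ] {X : ℕ → Ω → ℝ} {s : Finset ℕ}
    {m : ℝ} (hint : ∀ k ∈ s, Integrable (X k) μ) (hmean : ∀ k ∈ s, ∫ ω, X k ω ∂μ = m)
    (b : ℝ) (ω : Ω) :
    ∑ k ∈ s, X k ω - #s * m =
      (∑ k ∈ s, cutoff b (X k ω) - ∫ ω', ∑ k ∈ s, cutoff b (X k ω') ∂μ) +
        ∑ k ∈ s, tailPart μ X b k ω := by
  rw [integral_finsetSum _ fun k hk =>
    (memLp_cutoff (hint k hk).aemeasurable b 1).integrable le_rfl]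
  calc ∑ k ∈ s, X k ω - #s * m = ∑ k ∈ s, (X k ω - ∫ ω', X k ω' ∂μ) := by
        rw [sum_sub_distrib, sum_congr rfl hmean, sum_const, nsmul_eq_mul]
    _ = ∑ k ∈ s, ((cutoff b (X k ω) - ∫ ω', cutoff b (X k ω') ∂μ) + tailPart μ X b k ω) :=
        sum_congr rfl fun k hk => sub_integral_eq_cutoff_add_tailPart (hint k hk) b ω
    _ = _ := by rw [sum_add_distrib, sum_sub_distrib]

variable [IsProbabilityMeasure μ] {X : ℕ → Ω → ℝ} {s : Finset ℕ} {b ν m t₁ t₂ : ℝ}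

theorem measureReal_ge_abs_sum_sub_le (hmeas : ∀ k, AEMeasurable (X k) μ)
    (hindep : iIndepFun X μ) (hp₁ : 1 ≤ p) (hp₂ : p ≤ 2) (hb : 0 ≤ b) (ht₁ : 0 < t₁)
    (ht₂ : 0 < t₂) (hint : ∀ k ∈ s, Integrable (fun ω => |X k ω| ^ p) μ)
    (hν : ∀ k ∈ s, ∫ ω, |X k ω| ^ p ∂μ ≤ ν) (hmean : ∀ k ∈ s, ∫ ω, X k ω ∂μ = m) :
    μ.real {ω | t₁ + t₂ ≤ |∑ k ∈ s, X k ω - #s * m|} ≤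
      #s * (b ^ (2 - p) * ν) / t₁ ^ 2 +
        (∫ ω, |∑ k ∈ s, tailPart μ X b k ω| ^ p ∂μ) / t₂ ^ p := by
  set T : Ω → ℝ := fun ω => ∑ k ∈ s, cutoff b (X k ω)
  set R : Ω → ℝ := fun ω => ∑ k ∈ s, tailPart μ X b k ω
  have hXp : ∀ k ∈ s, MemLp (X k) (ENNReal.ofReal p) μ := fun k hk =>
    (memLp_ofReal_iff_integrable_abs_rpow (hmeas k).aestronglyMeasurable
      (by linarith)).2 (hint k hk)
  have hRp : MemLp R (ENNReal.ofReal p) μ :=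
    memLp_finsetSum s fun k hk => memLp_tailPart (hXp k hk) b
  have hsubset : {ω | t₁ + t₂ ≤ |∑ k ∈ s, X k ω - #s * m|} ⊆
      {ω | t₁ ≤ |T ω - μ[T]|} ∪ {ω | t₂ ≤ |R ω|} := by
    intro ω hω
    by_contra h
    simp only [Set.mem_union, Set.mem_ofPred_eq, not_or, not_le] at h hω
    rw [sum_sub_card_mul_eq_add_sum_tailPart
      (fun k hk => (hXp k hk).integrable (by simpa using hp₁)) hmean b] at hω
    linarith [abs_add_le (T ω - μ[T]) (R ω)]
  calc μ.real {ω | t₁ + t₂ ≤ |∑ k ∈ s, X k ω - #s * m|}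
      ≤ μ.real {ω | t₁ ≤ |T ω - μ[T]|} + μ.real {ω | t₂ ≤ |R ω|} :=
        (measureReal_mono hsubset).trans (measureReal_union_le _ _)
    _ ≤ _ := by
      gcongr
      · refine (measureReal_ge_le_variance_div_sq
          (memLp_finsetSum s fun k _ => memLp_cutoff (hmeas k) b 2) ht₁).trans ?_
        gcongr
        exact variance_sum_cutoff_le hmeas hindep hb hp₂ hint hν
      · exact measureReal_ge_le_integral_abs_rpow_div
          ((memLp_ofReal_iff_integrable_abs_rpow hRp.1 (by linarith)).1 hRp) (by linarith) ht₂

theorem one_sub_le_measureReal_abs_sum_sub_lt (hmeas : ∀ k, AEMeasurable (X k) μ)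
    (hindep : iIndepFun X μ) (hp₁ : 1 ≤ p) (hp₂ : p ≤ 2) (hb : 0 ≤ b) (ht₁ : 0 < t₁)
    (ht₂ : 0 < t₂) (hint : ∀ k ∈ s, Integrable (fun ω => |X k ω| ^ p) μ)
    (hν : ∀ k ∈ s, ∫ ω, |X k ω| ^ p ∂μ ≤ ν) (hmean : ∀ k ∈ s, ∫ ω, X k ω ∂μ = m) :
    1 - (#s * (b ^ (2 - p) * ν) / t₁ ^ 2 +
        (∫ ω, |∑ k ∈ s, tailPart μ X b k ω| ^ p ∂μ) / t₂ ^ p) ≤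
      μ.real {ω | |∑ k ∈ s, X k ω - #s * m| < t₁ + t₂} := by
  have hgood : {ω | |∑ k ∈ s, X k ω - #s * m| < t₁ + t₂} =
      {ω | t₁ + t₂ ≤ |∑ k ∈ s, X k ω - #s * m|}ᶜ := by
    ext ω
    simp only [Set.mem_ofPred_eq, Set.mem_compl_iff, not_le]
  have hmeasurable : NullMeasurableSet {ω | t₁ + t₂ ≤ |∑ k ∈ s, X k ω - #s * m|} μ :=
    nullMeasurableSet_le aemeasurable_const
      ((Finset.aemeasurable_fun_sum s fun k _ => hmeas k).sub_const _).abs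
  rw [hgood, measureReal_compl₀ hmeasurable, probReal_univ]
  linarith [measureReal_ge_abs_sum_sub_le hmeas hindep hp₁ hp₂ hb ht₁ ht₂ hint hν hmean]

end Probability

lemma abs_one_div_mul_sub_lt_iff {n S m r : ℝ} (hn : 0 < n) :
    |1 / n * S - m| < r ↔ |S - n * m| < n * r := by
  rw [show 1 / n * S - m = (S - n * m) / n by field_simp, abs_div, abs_of_pos hn,
    div_lt_iff₀ hn, mul_comm r]

section Scaling

variable {α : ℝ}

lemma rpow_one_div_one_add_rpow_two_sub {x : ℝ} (hx : 0 < x) (hα : 1 + α ≠ 0) :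
    (x ^ (1 / (1 + α))) ^ (2 - (1 + α)) = x * (x⁻¹ ^ (α / (1 + α))) ^ 2 := by
  have hexp : 1 / (1 + α) * (2 - (1 + α)) = 1 + -(α / (1 + α)) * (2 : ℕ) := by
    field_simp
    ring
  rw [← Real.rpow_mul hx.le, hexp, Real.rpow_add hx, Real.rpow_one, Real.rpow_mul hx.le,
    Real.rpow_neg hx.le, ← Real.inv_rpow hx.le, Real.rpow_natCast]

lemma mul_div_rpow_div_one_add_rpow {n L : ℝ} (hn : 0 < n) (hL : 0 < L) (hα : 0 < 1 + α) :
    (n * (L / n) ^ (α / (1 + α))) ^ (1 + α) = n * L ^ α := by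
  rw [Real.mul_rpow hn.le (by positivity), ← Real.rpow_mul (by positivity),
    div_mul_cancel₀ _ hα.ne', Real.div_rpow hL.le hn.le, Real.rpow_add hn, Real.rpow_one]
  have : n ^ α ≠ 0 := (Real.rpow_pos_of_pos hn α).ne'
  field_simp

variable {n L c ν : ℝ}

lemma truncation_level_variance_ratio (hn : 0 < n) (hL : 0 < L) (hc : 0 < c) (hν : 0 < ν)
    (hα : 1 + α ≠ 0) :
    n * (((n / L) ^ (1 / (1 + α))) ^ (2 - (1 + α)) * ν) /
      (n * (√(3 * c * ν) * (L / n) ^ (α / (1 + α)))) ^ 2 = 1 / (3 * c * L) := by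
  rw [rpow_one_div_one_add_rpow_two_sub (by positivity) hα, inv_div, mul_pow, mul_pow,
    Real.sq_sqrt (by positivity)]
  have : (L / n) ^ (α / (1 + α)) ≠ 0 := by positivity
  field_simp

lemma truncation_level_moment_ratio {cα : ℝ} (hn : 0 < n) (hL : 0 < L) (hcα : 0 < cα)
    (hν : 0 < ν) (hα : 0 < 1 + α) :
    2 ^ (1 + α) * cα * ν * n /
      (n * (2 * (cα * ν) ^ (1 / (1 + α)) * (L / n) ^ (α / (1 + α)))) ^ (1 + α) = L ^ (-α) := by
  rw [mul_left_comm, Real.mul_rpow (by positivity) (by positivity),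
    mul_div_rpow_div_one_add_rpow hn hL hα, Real.mul_rpow two_pos.le (by positivity),
    ← Real.rpow_mul (by positivity), one_div_mul_cancel hα.ne', Real.rpow_one,
    Real.rpow_neg hL.le]
  have : (2 : ℝ) ^ (1 + α) ≠ 0 := by positivity
  field_simp

end Scaling

/-- Corollary 3 of the paper: for mutually independent random variables with
common mean `μ₀` and finite `(1+α)`-th moments, there are `c₀ > 0` and a threshold `n₀`
(depending on `δ`) such that for all `c ≥ c₀` and `n ≥ n₀`, with probability at least
`1 - δ/2 - (2log(1/δ))^{-α}`, `|n⁻¹ ∑_{k=1}^n X_k - μ₀| < (a₁+a₂)(2log(1/δ)/n)^{α/(1+α)}`,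
where `a₁ = √(3cνα)` and `a₂ = 2(cα να)^{1/(1+α)}`. -/
theorem sample_mean_corollary_three
    {Ω : Type*} [MeasurableSpace Ω] (μ : Measure Ω) [IsProbabilityMeasure μ]
    (X : ℕ → Ω → ℝ) (hmeas : ∀ n, Measurable (X n))
    (hindep : iIndepFun X μ)
    (α να : ℝ) (hα0 : 0 < α) (hα1 : α < 1)
    (hint : ∀ n : ℕ, 1 ≤ n → Integrable (fun ω => |X n ω| ^ (1 + α)) μ)
    (hbdd : BddAbove (Set.range fun n : ℕ => ∫ ω, |X (n + 1) ω| ^ (1 + α) ∂μ))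
    (hνα : να = ⨆ n : ℕ, ∫ ω, |X (n + 1) ω| ^ (1 + α) ∂μ) (hνpos : 0 < να)
    (μ₀ : ℝ) (hmean : ∀ k : ℕ, 1 ≤ k → ∫ ω, X k ω ∂μ = μ₀)
    (cα : ℝ) (hcα : 0 < cα)
    (hcαineq : ∀ n : ℕ, 1 ≤ n → ∀ b : ℝ, 0 < b →
      ∫ ω, |∑ k ∈ Finset.Icc 1 n, tailPart μ X b k ω| ^ (1 + α) ∂μ ≤
        2 ^ (1 + α) * cα * να * n)
    (δ a₂ : ℝ) (hδ : δ ∈ Set.Ioo (0:ℝ) 1)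
    (ha₂ : a₂ = 2 * (cα * να) ^ (1 / (1 + α))) :
    ∃ c₀ : ℝ, 0 < c₀ ∧ ∃ n₀ : ℕ, ∀ c : ℝ, c₀ ≤ c → ∀ n : ℕ, n₀ ≤ n →
      1 - δ/2 - (2 * Real.log (1/δ)) ^ (-α) ≤
        (μ {ω | |(1 / (n:ℝ)) * (∑ k ∈ Finset.Icc 1 n, X k ω) - μ₀| <
          (Real.sqrt (3 * c * να) + a₂) * (2 * Real.log (1/δ) / n) ^ (α / (1 + α))}).toReal := by
  subst ha₂
  obtain ⟨hδ0, hδ1⟩ := hδ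
  set L := 2 * Real.log (1 / δ)
  have hL : 0 < L := mul_pos two_pos (Real.log_pos (one_lt_one_div hδ0 hδ1))
  refine ⟨2 / (3 * L * δ), by positivity, 1, fun c hc n hn => ?_⟩
  have hn0 : (0 : ℝ) < n := by exact_mod_cast hn
  have hc0 : 0 < c := lt_of_lt_of_le (by positivity) hc
  have hν : ∀ k ∈ Icc 1 n, ∫ ω, |X k ω| ^ (1 + α) ∂μ ≤ να := fun k hk => by
    obtain ⟨j, rfl⟩ := Nat.exists_eq_add_of_le' (mem_Icc.1 hk).1
    exact hνα ▸ le_ciSup hbdd j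
  have hbound := one_sub_le_measureReal_abs_sum_sub_lt (fun k => (hmeas k).aemeasurable) hindep
    (s := Icc 1 n) (b := (n / L) ^ (1 / (1 + α)))
    (t₁ := n * (√(3 * c * να) * (L / n) ^ (α / (1 + α))))
    (t₂ := n * (2 * (cα * να) ^ (1 / (1 + α)) * (L / n) ^ (α / (1 + α)))) (by linarith)
    (by linarith) (by positivity) (by positivity) (by positivity)
    (fun k hk => hint k (mem_Icc.1 hk).1) hν (fun k hk => hmean k (mem_Icc.1 hk).1)
  rw [Nat.card_Icc, Nat.add_sub_cancel, truncation_level_variance_ratio hn0 hL hc0 hνpos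
    (by linarith)] at hbound
  have hmarkov := div_le_div_of_nonneg_right (hcαineq n hn ((n / L) ^ (1 / (1 + α)))
    (by positivity)) (by positivity : (0 : ℝ) ≤
      (n * (2 * (cα * να) ^ (1 / (1 + α)) * (L / n) ^ (α / (1 + α)))) ^ (1 + α))
  rw [truncation_level_moment_ratio hn0 hL hcα hνpos (by linarith)] at hmarkov
  have hchebyshev : 1 / (3 * c * L) ≤ δ / 2 := by
    rw [div_le_iff₀ (by positivity)] at hc
    rw [div_le_div_iff₀ (by positivity) two_pos]
    linarith
  rw [← measureReal_def]
  refine le_trans ?_ (hbound.trans_eq (congrArg μ.real (Set.ext fun ω => ?_)))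
  · linarith
  · rw [Set.mem_ofPred_eq, Set.mem_ofPred_eq, abs_one_div_mul_sub_lt_iff hn0, add_mul, mul_add]
end

section
/- Let Z be a random variable with E|Z|^s < ∞, where s ∈ (1,2), and let L ≥ E|Z|^s with L > 0. Then ∫_L^∞ x^{-2/s} E( Z²·1(|Z| ≤ x^{1/s}) ) dx ≤ ( 2s/(2−s)² + 2/(2−s) )·E|Z|^s. -/
open MeasureTheory

/-! By Tonelli the two integrals may be swapped. For fixed `ω`, with `y = |Z ω|^s`, the
truncation `1(|Z| ≤ x^{1/s})` is `1(y ≤ x)` and `Z² = y^{2/s}`, so the inner integral is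
`y^{2/s} ∫_{max y L}^∞ x^{-2/s} dx = (s/(2-s)) y^{2/s} (max y L)^{1-2/s} ≤ (s/(2-s)) y`.
Integrating in `ω` gives `(s/(2-s)) E|Z|^s`, and `s/(2-s) ≤ 2s/(2-s)² + 2/(2-s)`. -/

open Set ENNReal

theorem ofReal_integral_le_lintegral_ofReal {α : Type*} [MeasurableSpace α] {μ : Measure α}
    {f : α → ℝ} (hf : ∀ᵐ a ∂μ, 0 ≤ f a) :
    ENNReal.ofReal (∫ a, f a ∂μ) ≤ ∫⁻ a, ENNReal.ofReal (f a) ∂μ :=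
  calc ENNReal.ofReal (∫ a, f a ∂μ) ≤ ‖∫ a, f a ∂μ‖ₑ := by
        rw [Real.enorm_eq_ofReal_abs]; exact ofReal_le_ofReal (le_abs_self _)
    _ ≤ ∫⁻ a, ‖f a‖ₑ ∂μ := enorm_integral_le_lintegral_enorm f
    _ = ∫⁻ a, ENNReal.ofReal (f a) ∂μ :=
        lintegral_congr_ae <| hf.mono fun a ha => Real.enorm_of_nonneg ha

theorem lintegral_Ici_rpow_of_lt {a c : ℝ} (ha : a < -1) (hc : 0 < c) :
    ∫⁻ x in Ici c, ENNReal.ofReal (x ^ a) = ENNReal.ofReal (-c ^ (a + 1) / (a + 1)) := by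
  rw [← restrict_Ioi_eq_restrict_Ici, ← integral_Ioi_rpow_of_lt ha hc,
    ofReal_integral_eq_lintegral_ofReal (integrableOn_Ioi_rpow_of_lt ha hc)]
  filter_upwards [ae_restrict_mem measurableSet_Ioi] with x hx
  exact Real.rpow_nonneg (hc.trans hx).le _

theorem rpow_one_sub_mul_rpow_le_self {y M q : ℝ} (hy : 0 ≤ y) (hyM : y ≤ M) (hq : 1 ≤ q) :
    M ^ (1 - q) * y ^ q ≤ y := by
  rcases hy.eq_or_lt with rfl | hy
  · rw [Real.zero_rpow (by linarith), mul_zero]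
  have hM : 0 < M := hy.trans_le hyM
  calc M ^ (1 - q) * y ^ q = y * (y ^ (q - 1) * M ^ (1 - q)) := by
        rw [Real.rpow_sub_one hy.ne']; field_simp
    _ ≤ y * (M ^ (q - 1) * M ^ (1 - q)) := by
        gcongr
    _ = y := by rw [← Real.rpow_add hM]; ring_nf; simp

theorem lintegral_Ici_rpow_neg_mul_ite_le {y L q : ℝ} (hy : 0 ≤ y) (hL : 0 < L)
    (hq : 1 < q) :
    ∫⁻ x in Ici L, ENNReal.ofReal (x ^ (-q) * if y ≤ x then y ^ q else 0) ≤
      ENNReal.ofReal (y / (q - 1)) := by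
  have hM : 0 < max y L := lt_max_of_lt_right hL
  have hind : ∀ x, ENNReal.ofReal (x ^ (-q) * if y ≤ x then y ^ q else 0) =
      (Ici y).indicator (fun x => ENNReal.ofReal (x ^ (-q)) * ENNReal.ofReal (y ^ q)) x := by
    intro x
    by_cases h : y ≤ x <;> simp [h, ENNReal.ofReal_mul' (Real.rpow_nonneg hy q)]
  calc ∫⁻ x in Ici L, ENNReal.ofReal (x ^ (-q) * if y ≤ x then y ^ q else 0)
      = ∫⁻ x in Ici (max y L), ENNReal.ofReal (x ^ (-q)) * ENNReal.ofReal (y ^ q) := by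
        simp_rw [hind]
        rw [lintegral_indicator measurableSet_Ici, Measure.restrict_restrict measurableSet_Ici,
          Ici_inter_Ici]
    _ = ENNReal.ofReal (-max y L ^ (-q + 1) / (-q + 1)) * ENNReal.ofReal (y ^ q) := by
        rw [lintegral_mul_const' _ _ ofReal_ne_top, lintegral_Ici_rpow_of_lt (by linarith) hM]
    _ = ENNReal.ofReal (max y L ^ (1 - q) * y ^ q / (q - 1)) := by
        rw [← ENNReal.ofReal_mul' (Real.rpow_nonneg hy q)]
        congr 1
        rw [neg_add_eq_sub, ← neg_sub q 1, div_neg, neg_div, neg_neg]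
        ring
    _ ≤ ENNReal.ofReal (y / (q - 1)) := by
        refine ENNReal.ofReal_le_ofReal (div_le_div_of_nonneg_right ?_ (by linarith))
        exact rpow_one_sub_mul_rpow_le_self hy (le_max_left _ _) hq.le

theorem truncated_sq_eq_truncated_rpow {s x : ℝ} (hs : 0 < s) (hx : 0 ≤ x) (z : ℝ) :
    (if |z| ≤ x ^ (1 / s) then z ^ 2 else 0) =
      if |z| ^ s ≤ x then (|z| ^ s) ^ (2 / s) else 0 := by
  simp_rw [one_div, Real.le_rpow_inv_iff_of_pos (abs_nonneg z) hx hs]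
  rw [← Real.rpow_mul (abs_nonneg z), mul_div_cancel₀ _ hs.ne', Real.rpow_two, sq_abs]

theorem lintegral_Ici_rpow_mul_truncated_sq_le {s L : ℝ} (hs : 0 < s) (hs2 : s < 2)
    (hL : 0 < L) (z : ℝ) :
    ∫⁻ x in Ici L,
        ENNReal.ofReal (x ^ (-(2 / s)) * if |z| ≤ x ^ (1 / s) then z ^ 2 else 0) ≤
      ENNReal.ofReal (s / (2 - s) * |z| ^ s) := by
  have hq : 1 < 2 / s := (one_lt_div hs).2 hs2
  have hcoeff : |z| ^ s / (2 / s - 1) = s / (2 - s) * |z| ^ s := by field_simp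
  rw [← hcoeff, setLIntegral_congr_fun measurableSet_Ici fun x hx => by
    rw [truncated_sq_eq_truncated_rpow hs (hL.trans_le hx).le]]
  exact lintegral_Ici_rpow_neg_mul_ite_le (Real.rpow_nonneg (abs_nonneg z) s) hL hq

theorem truncated_second_moment_integral_bound_general
    {Ω : Type*} [MeasurableSpace Ω] (μ : Measure Ω) [IsProbabilityMeasure μ]
    (Z : Ω → ℝ) (hZ : Measurable Z) (s : ℝ) (hs1 : 1 < s) (hs2 : s < 2)
    (hint : Integrable (fun ω => |Z ω| ^ s) μ)
    (L : ℝ) (hL : 0 < L) :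
    ∫⁻ x in Set.Ici L, ENNReal.ofReal
        (x ^ (-(2/s)) * ∫ ω, (if |Z ω| ≤ x ^ (1/s) then (Z ω) ^ 2 else 0) ∂μ) ≤
      ENNReal.ofReal
        ((2 * s / (2 - s) ^ 2 + 2 / (2 - s)) * ∫ ω, |Z ω| ^ s ∂μ) := by
  have hs : 0 < s := by linarith
  have hconst : s / (2 - s) ≤ 2 * s / (2 - s) ^ 2 + 2 / (2 - s) := by
    have h2s : 0 < 2 - s := by linarith
    have : s / (2 - s) ≤ 2 * s / (2 - s) ^ 2 := by
      rw [div_le_div_iff₀ h2s (by positivity)]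
      nlinarith
    linarith [div_pos two_pos h2s]
  calc ∫⁻ x in Ici L, ENNReal.ofReal
        (x ^ (-(2/s)) * ∫ ω, (if |Z ω| ≤ x ^ (1/s) then (Z ω) ^ 2 else 0) ∂μ)
      ≤ ∫⁻ x in Ici L, ∫⁻ ω, ENNReal.ofReal
          (x ^ (-(2/s)) * if |Z ω| ≤ x ^ (1/s) then (Z ω) ^ 2 else 0) ∂μ := by
        refine setLIntegral_mono' measurableSet_Ici fun x hx => ?_
        rw [← integral_const_mul]
        refine ofReal_integral_le_lintegral_ofReal (ae_of_all _ fun ω => ?_)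
        exact mul_nonneg (Real.rpow_nonneg (hL.trans_le hx).le _) (by split_ifs <;> positivity)
    _ = ∫⁻ ω, (∫⁻ x in Ici L, ENNReal.ofReal
          (x ^ (-(2/s)) * if |Z ω| ≤ x ^ (1/s) then (Z ω) ^ 2 else 0)) ∂μ := by
        refine lintegral_lintegral_swap (Measurable.aemeasurable ?_)
        have hZ' : Measurable fun p : ℝ × Ω => Z p.2 := hZ.comp measurable_snd
        refine ((measurable_fst.pow_const _).mul (Measurable.ite ?_ (hZ'.pow_const 2)
          measurable_const)).ennreal_ofReal
        exact measurableSet_le hZ'.abs (measurable_fst.pow_const _)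
    _ ≤ ∫⁻ ω, ENNReal.ofReal (s / (2 - s) * |Z ω| ^ s) ∂μ :=
        lintegral_mono fun ω => lintegral_Ici_rpow_mul_truncated_sq_le hs hs2 hL (Z ω)
    _ = ENNReal.ofReal (s / (2 - s) * ∫ ω, |Z ω| ^ s ∂μ) := by
        rw [← integral_const_mul, ofReal_integral_eq_lintegral_ofReal (hint.const_mul _)
          (ae_of_all _ fun ω => by positivity)]
    _ ≤ _ := by
        gcongr

/-- inequality (6) in the proof of Lemma 1: for a random variable `Z` with
`E|Z|^s < ∞`, `s ∈ (1,2)`, and any `L ≥ E|Z|^s` with `L > 0`,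
`∫_L^∞ x^{-2/s} E(Z²·1(|Z| ≤ x^{1/s})) dx ≤ (2s/(2-s)² + 2/(2-s))·E|Z|^s`. -/
theorem truncated_second_moment_integral_bound
    {Ω : Type*} [MeasurableSpace Ω] (μ : Measure Ω) [IsProbabilityMeasure μ]
    (Z : Ω → ℝ) (hZ : Measurable Z) (s : ℝ) (hs1 : 1 < s) (hs2 : s < 2)
    (hint : Integrable (fun ω => |Z ω| ^ s) μ)
    (L : ℝ) (hL : 0 < L) (hLs : ∫ ω, |Z ω| ^ s ∂μ ≤ L) :
    ∫⁻ x in Set.Ici L, ENNReal.ofReal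
        (x ^ (-(2/s)) * ∫ ω, (if |Z ω| ≤ x ^ (1/s) then (Z ω) ^ 2 else 0) ∂μ) ≤
      ENNReal.ofReal
        ((2 * s / (2 - s) ^ 2 + 2 / (2 - s)) * ∫ ω, |Z ω| ^ s ∂μ) :=
  truncated_second_moment_integral_bound_general μ Z hZ s hs1 hs2 hint L hL
end

section
/- Let {X_n, n≥1} satisfy the φ-mixing condition (1) with rate r>2 and constant C>0, and the moment condition (2) with exponent α ∈ (0,1) and ν_α = sup_n E|X_n|^{1+α}. Let b>0 and Y_k = X_k·1(|X_k|≤b) − E(X_k·1(|X_k|≤b)), and φ = Σ_{m=1}^∞ φ(m)^{1/2}. Then for any integers m≥1 and i≥1, the block sum ξ = Σ_{j=1}^m Y_{i+j} satisfies E(ξ²) ≤ m·ν_α·(1+4φ)·b^{1−α}. -/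
open MeasureTheory ProbabilityTheory Finset

noncomputable def phiCoef {Ω : Type*} [MeasurableSpace Ω] (μ : Measure Ω)
    (X : ℕ → Ω → ℝ) (m : ℕ) : ℝ :=
  sSup {x : ℝ | ∃ k : ℕ, 1 ≤ k ∧ ∃ A B : Set Ω,
    MeasurableSet[⨆ i ∈ Set.Icc 1 k, MeasurableSpace.comap (X i) inferInstance] A ∧
    MeasurableSet[⨆ i ∈ Set.Ici (k + m), MeasurableSpace.comap (X i) inferInstance] B ∧
    0 < μ A ∧
    x = |(μ (B ∩ A)).toReal / (μ A).toReal - (μ B).toReal|}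

noncomputable def phiSum {Ω : Type*} [MeasurableSpace Ω] (μ : Measure Ω)
    (X : ℕ → Ω → ℝ) : ℝ :=
  ∑' m : ℕ, Real.sqrt (phiCoef μ X (m + 1))

noncomputable def mainPart {Ω : Type*} [MeasurableSpace Ω] (μ : Measure Ω)
    (X : ℕ → Ω → ℝ) (b : ℝ) (k : ℕ) (ω : Ω) : ℝ :=
  (if |X k ω| ≤ b then X k ω else 0) - ∫ ω', (if |X k ω'| ≤ b then X k ω' else 0) ∂μ

/-!
The heart of the proof is Ibragimov's covariance inequality: if `|P(A ∩ B) - P(A) P(B)| ≤ φ P(A)`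
for all `A ∈ F` and `B ∈ G`, then `(E fg - E f E g)² ≤ 4 φ E f² E g²` for `F`-measurable `f` and
`G`-measurable `g` in `L²`. For finitely-valued `f` and `g`, `E fg - E f E g = ∑ a b D(a, b)` with
`D(a, b) = P(f = a, g = b) - P(f = a) P(g = b)`. Mixing bounds the row sums
`∑_b |D(a, b)| ≤ 2 φ P(f = a)`, the column sums `∑_a |D(a, b)|` are at most `2 P(g = b)`, and
Cauchy–Schwarz over the pairs `(a, b)` with weights `|D(a, b)|` gives the inequality; the general
case follows by simple-function approximation and dominated convergence.

The centred truncations `Y_k` have `E Y_k² ≤ E (X_k 1(|X_k| ≤ b))² ≤ b^{1-α} ν_α`, so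
`|E Y_j Y_j'| ≤ 2 φ(|j - j'|)^{1/2} ν_α b^{1-α}`, and every row of the covariance matrix of the
block sums to at most `(1 + 4φ) ν_α b^{1-α}`.
-/

open Filter Topology

lemma Finset.sum_abs_le_two_mul_of_abs_sum_le {ι : Type*} {t : Finset ι} {x : ι → ℝ} {c : ℝ}
    (h : ∀ s ⊆ t, |∑ i ∈ s, x i| ≤ c) : ∑ i ∈ t, |x i| ≤ 2 * c := by
  have hpos := h _ (filter_subset (fun i => 0 ≤ x i) t)
  have hneg := h _ (filter_subset (fun i => ¬0 ≤ x i) t)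
  rw [← sum_filter_add_sum_filter_not t (fun i => 0 ≤ x i),
    sum_congr rfl fun i hi => abs_of_nonneg (mem_filter.1 hi).2,
    sum_congr rfl fun i hi => abs_of_neg (not_le.1 (mem_filter.1 hi).2), sum_neg_distrib]
  linarith [le_abs_self (∑ i ∈ t with 0 ≤ x i, x i), neg_abs_le (∑ i ∈ t with ¬0 ≤ x i, x i)]

lemma Finset.sq_sum_sum_mul_le {ι κ : Type*} (s : Finset ι) (t : Finset κ) (x : ι → ℝ)
    (y : κ → ℝ) (D : ι → κ → ℝ) {p : ι → ℝ} {q : κ → ℝ}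
    (hrow : ∀ i ∈ s, ∑ j ∈ t, |D i j| ≤ p i) (hcol : ∀ j ∈ t, ∑ i ∈ s, |D i j| ≤ q j) :
    (∑ i ∈ s, ∑ j ∈ t, x i * y j * D i j) ^ 2 ≤
      (∑ i ∈ s, x i ^ 2 * p i) * ∑ j ∈ t, y j ^ 2 * q j := by
  have hcs : (∑ i ∈ s, ∑ j ∈ t, |x i * y j * D i j|) ^ 2 ≤
      (∑ i ∈ s, ∑ j ∈ t, x i ^ 2 * |D i j|) * ∑ i ∈ s, ∑ j ∈ t, y j ^ 2 * |D i j| := by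
    simp only [← sum_product']
    refine sum_sq_le_sum_mul_sum_of_sq_le_mul _ (fun _ _ => by positivity)
      (fun _ _ => by positivity) fun ij _ => le_of_eq ?_
    rw [abs_mul, abs_mul, mul_pow, mul_pow, sq_abs, sq_abs]
    ring
  have hx : ∑ i ∈ s, ∑ j ∈ t, x i ^ 2 * |D i j| ≤ ∑ i ∈ s, x i ^ 2 * p i :=
    sum_le_sum fun i hi => by
      rw [← mul_sum]; exact mul_le_mul_of_nonneg_left (hrow i hi) (sq_nonneg _)
  have hy : ∑ i ∈ s, ∑ j ∈ t, y j ^ 2 * |D i j| ≤ ∑ j ∈ t, y j ^ 2 * q j := by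
    rw [sum_comm]
    exact sum_le_sum fun j hj => by
      rw [← mul_sum]; exact mul_le_mul_of_nonneg_left (hcol j hj) (sq_nonneg _)
  calc (∑ i ∈ s, ∑ j ∈ t, x i * y j * D i j) ^ 2
      ≤ (∑ i ∈ s, ∑ j ∈ t, |x i * y j * D i j|) ^ 2 := by
        rw [← sq_abs]
        gcongr
        exact (abs_sum_le_sum_abs _ _).trans (sum_le_sum fun i _ => abs_sum_le_sum_abs _ _)
    _ ≤ _ := hcs.trans (mul_le_mul hx hy (by positivity) ((sum_nonneg fun i _ =>
        sum_nonneg fun j _ => by positivity).trans hx))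

lemma Finset.sum_comp_le_tsum {ι : Type*} {u : ℕ → ℝ} (hu : ∀ n, 0 ≤ u n) (hs : Summable u)
    {s : Finset ι} {e : ι → ℕ} (he : Set.InjOn e s) : ∑ i ∈ s, u (e i) ≤ ∑' n, u n := by
  rw [← sum_image he]
  exact hs.sum_le_tsum _ fun n _ => hu n

section FiniteRange

variable {Ω β : Type*} [MeasurableSpace Ω] [MeasurableSpace β] [MeasurableSingletonClass β]
  {μ : Measure Ω} [IsFiniteMeasure μ]

lemma integral_comp_eq_sum_of_mem {F : Ω → β} (hF : Measurable F) {s : Finset β}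
    (hs : ∀ x, F x ∈ s) (H : β → ℝ) :
    ∫ x, H (F x) ∂μ = ∑ c ∈ s, μ.real (F ⁻¹' {c}) * H c := by
  have hfib : ∀ c, MeasurableSet (F ⁻¹' {c}) := fun c => hF (measurableSet_singleton c)
  have hpt : ∀ x, H (F x) = ∑ c ∈ s, (F ⁻¹' {c}).indicator (fun _ => H c) x := fun x => by
    rw [sum_eq_single_of_mem (F x) (hs x) fun c _ hc => Set.indicator_of_notMem (hc ·.symm) _,
      Set.indicator_of_mem (s := F ⁻¹' {F x}) rfl]
  simp_rw [hpt]
  rw [integral_finsetSum _ fun c _ => (integrable_const (H c)).indicator (hfib c)]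
  exact sum_congr rfl fun c _ => by rw [integral_indicator_const _ (hfib c), smul_eq_mul]

lemma sum_measureReal_inter_preimage_singleton {g : Ω → β} (hg : Measurable g) (A : Set Ω)
    (t : Finset β) : ∑ b ∈ t, μ.real (A ∩ g ⁻¹' {b}) = μ.real (A ∩ g ⁻¹' t) := by
  simp_rw [Set.inter_comm A, ← measureReal_restrict_apply (hg (measurableSet_singleton _)),
    ← measureReal_restrict_apply (hg t.measurableSet)]
  exact sum_measureReal_preimage_singleton t fun b _ => hg (measurableSet_singleton b)

lemma integral_mul_sub_eq_sum {f g : Ω → ℝ} (hf : Measurable f) (hg : Measurable g)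
    {sf sg : Finset ℝ} (hsf : ∀ x, f x ∈ sf) (hsg : ∀ x, g x ∈ sg) :
    ∫ x, f x * g x ∂μ - (∫ x, f x ∂μ) * ∫ x, g x ∂μ = ∑ a ∈ sf, ∑ b ∈ sg,
      a * b * (μ.real (f ⁻¹' {a} ∩ g ⁻¹' {b}) - μ.real (f ⁻¹' {a}) * μ.real (g ⁻¹' {b})) := by
  have hfg : ∫ x, f x * g x ∂μ =
      ∑ a ∈ sf, ∑ b ∈ sg, μ.real (f ⁻¹' {a} ∩ g ⁻¹' {b}) * (a * b) := by
    rw [integral_comp_eq_sum_of_mem (hf.prodMk hg) (s := sf ×ˢ sg)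
      (fun x => mem_product.2 ⟨hsf x, hsg x⟩) (fun c => c.1 * c.2), sum_product]
    simp_rw [← Set.singleton_prod_singleton, Set.mk_preimage_prod]
  have hf1 : ∫ x, f x ∂μ = ∑ a ∈ sf, μ.real (f ⁻¹' {a}) * a :=
    integral_comp_eq_sum_of_mem hf hsf id
  have hg1 : ∫ x, g x ∂μ = ∑ b ∈ sg, μ.real (g ⁻¹' {b}) * b :=
    integral_comp_eq_sum_of_mem hg hsg id
  rw [hfg, hf1, hg1, sum_mul_sum, ← sum_sub_distrib]
  refine sum_congr rfl fun a _ => ?_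
  rw [← sum_sub_distrib]
  exact sum_congr rfl fun b _ => by ring

lemma sum_abs_measureReal_inter_sub_le [IsProbabilityMeasure μ] {f : Ω → β} (hf : Measurable f)
    {s : Finset β} (hs : ∀ x, f x ∈ s) (B : Set Ω) :
    ∑ a ∈ s, |μ.real (f ⁻¹' {a} ∩ B) - μ.real (f ⁻¹' {a}) * μ.real B| ≤ 2 * μ.real B := by
  have hpre : f ⁻¹' s = Set.univ := Set.eq_univ_of_forall hs
  have hB : ∑ a ∈ s, μ.real (f ⁻¹' {a} ∩ B) = μ.real B := by
    simp_rw [Set.inter_comm (f ⁻¹' _)]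
    rw [sum_measureReal_inter_preimage_singleton hf, hpre, Set.inter_univ]
  have hone : ∑ a ∈ s, μ.real (f ⁻¹' {a}) = 1 := by
    rw [sum_measureReal_preimage_singleton s fun a _ => hf (measurableSet_singleton a), hpre,
      probReal_univ]
  calc ∑ a ∈ s, |μ.real (f ⁻¹' {a} ∩ B) - μ.real (f ⁻¹' {a}) * μ.real B|
      ≤ ∑ a ∈ s, (μ.real (f ⁻¹' {a} ∩ B) + μ.real (f ⁻¹' {a}) * μ.real B) :=
        sum_le_sum fun a _ => (abs_sub _ _).trans_eq <| by
          rw [abs_of_nonneg measureReal_nonneg, abs_of_nonneg (by positivity)]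
    _ = 2 * μ.real B := by rw [sum_add_distrib, hB, ← sum_mul, hone]; ring

end FiniteRange

lemma exists_finite_range_tendsto {Ω : Type*} {m : MeasurableSpace Ω} {f : Ω → ℝ}
    (hf : Measurable[m] f) :
    ∃ fn : ℕ → Ω → ℝ, (∀ n, Measurable[m] (fn n)) ∧ (∀ n, ∃ s : Finset ℝ, ∀ x, fn n x ∈ s) ∧
      (∀ n x, |fn n x| ≤ 2 * |f x|) ∧ ∀ x, Tendsto (fun n => fn n x) atTop (𝓝 (f x)) :=
  ⟨fun n => SimpleFunc.approxOn f hf Set.univ 0 (Set.mem_univ 0) n,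
    fun _ => SimpleFunc.measurable _, fun _ => ⟨_, SimpleFunc.mem_range_self _⟩,
    fun n x => (SimpleFunc.norm_approxOn_zero_le hf (Set.mem_univ 0) x n).trans_eq (two_mul _).symm,
    fun _ => SimpleFunc.tendsto_approxOn hf (Set.mem_univ 0) (subset_closure (Set.mem_univ _))⟩

section Covariance

variable {Ω : Type*} {F G : MeasurableSpace Ω} [m0 : MeasurableSpace Ω] {μ : Measure Ω}
  [IsProbabilityMeasure μ] {φ : ℝ}

/-- `φ(F, G) ≤ φ`, with `|P(B | A) - P(B)| ≤ φ` multiplied through by `P(A)` so that null sets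
`A` need no separate treatment. -/
def PhiMixingLE (μ : Measure Ω) (F G : MeasurableSpace Ω) (φ : ℝ) : Prop :=
  ∀ A B, MeasurableSet[F] A → MeasurableSet[G] B →
    |μ.real (A ∩ B) - μ.real A * μ.real B| ≤ φ * μ.real A

lemma PhiMixingLE.nonneg (h : PhiMixingLE μ F G φ) : 0 ≤ φ := by
  simpa using h Set.univ Set.univ MeasurableSet.univ MeasurableSet.univ

lemma PhiMixingLE.sum_abs_sub_le (h : PhiMixingLE μ F G φ) (hG : G ≤ m0) {A : Set Ω}
    (hA : MeasurableSet[F] A) {g : Ω → ℝ} (hg : Measurable[G] g) (t : Finset ℝ) :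
    ∑ b ∈ t, |μ.real (A ∩ g ⁻¹' {b}) - μ.real A * μ.real (g ⁻¹' {b})| ≤ 2 * φ * μ.real A := by
  have hg0 : Measurable[m0] g := hg.mono hG le_rfl
  rw [mul_assoc]
  refine sum_abs_le_two_mul_of_abs_sum_le fun u _ => ?_
  rw [sum_sub_distrib, sum_measureReal_inter_preimage_singleton hg0, ← mul_sum,
    sum_measureReal_preimage_singleton u fun b _ => hg0 (measurableSet_singleton b)]
  exact h _ _ hA (hg u.measurableSet)

theorem sq_integral_mul_sub_le_of_finite_range (hF : F ≤ m0) (hG : G ≤ m0)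
    (hmix : PhiMixingLE μ F G φ) {f g : Ω → ℝ} (hf : Measurable[F] f) (hg : Measurable[G] g)
    {sf sg : Finset ℝ} (hsf : ∀ x, f x ∈ sf) (hsg : ∀ x, g x ∈ sg) :
    (∫ x, f x * g x ∂μ - (∫ x, f x ∂μ) * ∫ x, g x ∂μ) ^ 2 ≤
      4 * φ * (∫ x, f x ^ 2 ∂μ) * ∫ x, g x ^ 2 ∂μ := by
  have hf0 : Measurable[m0] f := hf.mono hF le_rfl
  have hg0 : Measurable[m0] g := hg.mono hG le_rfl
  have hf2 : ∫ x, f x ^ 2 ∂μ = ∑ a ∈ sf, μ.real (f ⁻¹' {a}) * a ^ 2 :=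
    integral_comp_eq_sum_of_mem hf0 hsf (· ^ 2)
  have hg2 : ∫ x, g x ^ 2 ∂μ = ∑ b ∈ sg, μ.real (g ⁻¹' {b}) * b ^ 2 :=
    integral_comp_eq_sum_of_mem hg0 hsg (· ^ 2)
  rw [integral_mul_sub_eq_sum hf0 hg0 hsf hsg]
  calc _ ≤ (∑ a ∈ sf, a ^ 2 * (2 * φ * μ.real (f ⁻¹' {a}))) *
        ∑ b ∈ sg, b ^ 2 * (2 * μ.real (g ⁻¹' {b})) :=
        sq_sum_sum_mul_le sf sg id id _
          (fun a _ => hmix.sum_abs_sub_le hG (hf (measurableSet_singleton a)) hg sg)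
          (fun b _ => sum_abs_measureReal_inter_sub_le hf0 hsf _)
    _ = (2 * φ * ∑ a ∈ sf, μ.real (f ⁻¹' {a}) * a ^ 2) *
        (2 * ∑ b ∈ sg, μ.real (g ⁻¹' {b}) * b ^ 2) := by
        congr 1 <;> rw [mul_sum] <;> exact sum_congr rfl fun _ _ => by ring
    _ = 4 * φ * (∫ x, f x ^ 2 ∂μ) * ∫ x, g x ^ 2 ∂μ := by rw [hf2, hg2]; ring

theorem sq_integral_mul_sub_le (hF : F ≤ m0) (hG : G ≤ m0) (hmix : PhiMixingLE μ F G φ)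
    {f g : Ω → ℝ} (hf : Measurable[F] f) (hg : Measurable[G] g) (hf2 : MemLp f 2 μ)
    (hg2 : MemLp g 2 μ) :
    (∫ x, f x * g x ∂μ - (∫ x, f x ∂μ) * ∫ x, g x ∂μ) ^ 2 ≤
      4 * φ * (∫ x, f x ^ 2 ∂μ) * ∫ x, g x ^ 2 ∂μ := by
  obtain ⟨fn, hfnF, hfns, hfnb, hfnt⟩ := exists_finite_range_tendsto hf
  obtain ⟨gn, hgnG, hgns, hgnb, hgnt⟩ := exists_finite_range_tendsto hg
  have hfn : ∀ n, Measurable[m0] (fn n) := fun n => (hfnF n).mono hF le_rfl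
  have hgn : ∀ n, Measurable[m0] (gn n) := fun n => (hgnG n).mono hG le_rfl
  have dct : ∀ {u : ℕ → Ω → ℝ} {v w : Ω → ℝ}, (∀ n, Measurable[m0] (u n)) → Integrable w μ →
      (∀ n x, |u n x| ≤ w x) → (∀ x, Tendsto (u · x) atTop (𝓝 (v x))) →
      Tendsto (fun n => ∫ x, u n x ∂μ) atTop (𝓝 (∫ x, v x ∂μ)) := fun hu hw hb hl =>
    tendsto_integral_of_dominated_convergence _ (fun n => (hu n).aestronglyMeasurable) hw
      (fun n => ae_of_all _ (hb n)) (ae_of_all _ hl)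
  have sq_le : ∀ a b : ℝ, |a| ≤ 2 * |b| → |a ^ 2| ≤ 4 * b ^ 2 := fun a b h => by
    rw [abs_pow, ← sq_abs b]
    nlinarith [abs_nonneg a]
  have mul_le : ∀ n x, |fn n x * gn n x| ≤ 4 * |(f * g) x| := fun n x => by
    rw [Pi.mul_apply, abs_mul, abs_mul]
    exact (mul_le_mul (hfnb n x) (hgnb n x) (abs_nonneg _) (by positivity)).trans_eq (by ring)
  have lim_fg := dct (v := fun x => f x * g x) (fun n => (hfn n).mul (hgn n))
    ((hf2.integrable_mul hg2).abs.const_mul 4) mul_le fun x => (hfnt x).mul (hgnt x)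
  have lim_f := dct hfn ((hf2.integrable one_le_two).abs.const_mul 2) hfnb hfnt
  have lim_g := dct hgn ((hg2.integrable one_le_two).abs.const_mul 2) hgnb hgnt
  have lim_f2 := dct (fun n => (hfn n).pow_const 2) (hf2.integrable_sq.const_mul 4)
    (fun n x => sq_le _ _ (hfnb n x)) fun x => (hfnt x).pow 2
  have lim_g2 := dct (fun n => (hgn n).pow_const 2) (hg2.integrable_sq.const_mul 4)
    (fun n x => sq_le _ _ (hgnb n x)) fun x => (hgnt x).pow 2
  refine le_of_tendsto_of_tendsto' ((lim_fg.sub (lim_f.mul lim_g)).pow 2)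
    ((tendsto_const_nhds.mul lim_f2).mul lim_g2) fun n => ?_
  obtain ⟨sf, hsf⟩ := hfns n
  obtain ⟨sg, hsg⟩ := hgns n
  exact sq_integral_mul_sub_le_of_finite_range hF hG hmix (hfnF n) (hgnG n) hsf hsg

end Covariance

theorem integral_sq_sum_le {Ω : Type*} [MeasurableSpace Ω] {μ : Measure Ω} {Z : ℕ → Ω → ℝ}
    {S : Finset ℕ} (hZ : ∀ j ∈ S, MemLp (Z j) 2 μ) {K : ℝ} {u : ℕ → ℝ} (hu : ∀ n, 0 ≤ u n)
    (hsum : Summable u) (hdiag : ∀ j ∈ S, ∫ x, Z j x ^ 2 ∂μ ≤ K)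
    (hcross : ∀ j ∈ S, ∀ j' ∈ S, j < j' → |∫ x, Z j x * Z j' x ∂μ| ≤ 2 * u (j' - j - 1) * K) :
    ∫ x, (∑ j ∈ S, Z j x) ^ 2 ∂μ ≤ #S * K * (1 + 4 * ∑' n, u n) := by
  have hint : ∀ j ∈ S, ∀ j' ∈ S, Integrable (fun x => Z j x * Z j' x) μ :=
    fun j hj j' hj' => (hZ j hj).integrable_mul (hZ j' hj')
  have hexpand : ∫ x, (∑ j ∈ S, Z j x) ^ 2 ∂μ = ∑ j ∈ S, ∑ j' ∈ S, ∫ x, Z j x * Z j' x ∂μ := by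
    simp_rw [sq, sum_mul_sum]
    rw [integral_finsetSum _ fun j hj => integrable_finsetSum _ fun j' hj' => hint j hj j' hj']
    exact sum_congr rfl fun j hj => integral_finsetSum _ fun j' hj' => hint j hj j' hj'
  have hrow : ∀ j ∈ S, ∑ j' ∈ S, ∫ x, Z j x * Z j' x ∂μ ≤ K * (1 + 4 * ∑' n, u n) := by
    intro j hj
    have hK : 0 ≤ K := (integral_nonneg fun _ => sq_nonneg _).trans (hdiag j hj)
    calc ∑ j' ∈ S, ∫ x, Z j x * Z j' x ∂μ
        ≤ ∑ j' ∈ S, ((if j' = j then K else 0) + (if j' < j then 2 * K * u (j - j' - 1) else 0)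
            + (if j < j' then 2 * K * u (j' - j - 1) else 0)) := by
          refine sum_le_sum fun j' hj' => ?_
          rcases lt_trichotomy j' j with h | rfl | h
          · simp only [h, h.ne, h.not_gt, if_true, if_false, zero_add, add_zero]
            simp_rw [mul_comm (Z j _)]
            exact (le_abs_self _).trans ((hcross j' hj' j hj h).trans_eq (by ring))
          · simp only [if_true, lt_irrefl, if_false, add_zero, ← sq]
            exact hdiag j' hj
          · simp only [h, h.ne', h.not_gt, if_true, if_false, zero_add]
            exact (le_abs_self _).trans ((hcross j hj j' hj' h).trans_eq (by ring))
      _ = K + 2 * K * ∑ j' ∈ S with j' < j, u (j - j' - 1)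
            + 2 * K * ∑ j' ∈ S with j < j', u (j' - j - 1) := by
          rw [sum_add_distrib, sum_add_distrib, sum_ite_eq' S j, if_pos hj, ← sum_filter,
            ← sum_filter, mul_sum, mul_sum]
      _ ≤ K + 2 * K * ∑' n, u n + 2 * K * ∑' n, u n := by
          gcongr <;> refine sum_comp_le_tsum hu hsum fun a ha a' ha' h => ?_ <;>
            simp only [coe_filter, Set.mem_ofPred_eq] at ha ha' <;> omega
      _ = K * (1 + 4 * ∑' n, u n) := by ring
  calc ∫ x, (∑ j ∈ S, Z j x) ^ 2 ∂μ ≤ ∑ _j ∈ S, K * (1 + 4 * ∑' n, u n) :=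
        hexpand ▸ sum_le_sum hrow
    _ = #S * K * (1 + 4 * ∑' n, u n) := by rw [sum_const, nsmul_eq_mul, mul_assoc]

lemma Summable.sqrt_of_le_rpow {a : ℕ → ℝ} {C r : ℝ} (hr : 2 < r)
    (ha : ∀ m : ℕ, 1 ≤ m → a m ≤ C * ((m : ℝ) + 1) ^ (-r)) :
    Summable fun d => √(a (d + 1)) := by
  have hbound : ∀ d : ℕ, √(a (d + 1)) ≤ √C * ((d + 2 : ℕ) : ℝ) ^ (-(r / 2)) := fun d =>
    calc √(a (d + 1)) ≤ √(C * ((d + 2 : ℕ) : ℝ) ^ (-r)) :=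
          Real.sqrt_le_sqrt <| (ha (d + 1) d.succ_pos).trans_eq <| by push_cast; ring_nf
      _ = √C * ((d + 2 : ℕ) : ℝ) ^ (-(r / 2)) := by
          rw [Real.sqrt_mul' _ (by positivity), Real.sqrt_eq_rpow (_ ^ (-r)),
            ← Real.rpow_mul (by positivity)]
          ring_nf
  refine .of_nonneg_of_le (fun _ => Real.sqrt_nonneg _) hbound (.mul_left _ ?_)
  exact (summable_nat_add_iff (f := fun n : ℕ => (n : ℝ) ^ (-(r / 2))) 2).2
    (Real.summable_nat_rpow.2 (by linarith))

section Sequence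

variable {Ω : Type*} [m0 : MeasurableSpace Ω] (μ : Measure Ω) [IsProbabilityMeasure μ]
  (X : ℕ → Ω → ℝ)

abbrev pastSigma (k : ℕ) : MeasurableSpace Ω :=
  ⨆ i ∈ Set.Icc 1 k, MeasurableSpace.comap (X i) inferInstance

abbrev futureSigma (n : ℕ) : MeasurableSpace Ω :=
  ⨆ i ∈ Set.Ici n, MeasurableSpace.comap (X i) inferInstance

variable {X}

lemma pastSigma_le (hX : ∀ n, Measurable (X n)) (k : ℕ) : pastSigma X k ≤ m0 :=
  iSup₂_le fun i _ => (hX i).comap_le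

lemma futureSigma_le (hX : ∀ n, Measurable (X n)) (n : ℕ) : futureSigma X n ≤ m0 :=
  iSup₂_le fun i _ => (hX i).comap_le

lemma phiMixingLE_phiCoef {k : ℕ} (hk : 1 ≤ k) (m : ℕ) :
    PhiMixingLE μ (pastSigma X k) (futureSigma X (k + m)) (phiCoef μ X m) := by
  intro A B hA hB
  rcases eq_zero_or_pos (μ A) with hA0 | hA0
  · have hAB : μ (A ∩ B) = 0 := measure_mono_null Set.inter_subset_left hA0
    simp [Measure.real, hA0, hAB]
  have hApos : 0 < μ.real A := ENNReal.toReal_pos hA0.ne' (measure_ne_top μ A)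
  have hle : |μ.real (B ∩ A) / μ.real A - μ.real B| ≤ phiCoef μ X m := by
    refine le_csSup ⟨1, ?_⟩ ⟨k, hk, A, B, hA, hB, hA0, rfl⟩
    rintro _ ⟨k, -, A, B, -, -, -, rfl⟩
    change |μ.real (B ∩ A) / μ.real A - μ.real B| ≤ 1
    have h1 : μ.real (B ∩ A) / μ.real A ≤ 1 :=
      div_le_one_of_le₀ (measureReal_mono Set.inter_subset_right) measureReal_nonneg
    have h2 : 0 ≤ μ.real (B ∩ A) / μ.real A := div_nonneg measureReal_nonneg measureReal_nonneg
    exact abs_sub_le_iff.2 ⟨by linarith [measureReal_nonneg (μ := μ) (s := B)],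
      by linarith [measureReal_le_one (μ := μ) (s := B)]⟩
  calc |μ.real (A ∩ B) - μ.real A * μ.real B|
      = |μ.real (B ∩ A) / μ.real A - μ.real B| * μ.real A := by
        rw [← abs_of_pos hApos, ← abs_mul, abs_of_pos hApos, Set.inter_comm, sub_mul,
          div_mul_cancel₀ _ hApos.ne', mul_comm]
    _ ≤ phiCoef μ X m * μ.real A := mul_le_mul_of_nonneg_right hle hApos.le

end Sequence

noncomputable def truncate (b y : ℝ) : ℝ := if |y| ≤ b then y else 0

lemma measurable_truncate (b : ℝ) : Measurable (truncate b) :=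
  measurable_id.ite (measurableSet_le measurable_abs measurable_const) measurable_const

lemma abs_truncate_le {b : ℝ} (hb : 0 ≤ b) (y : ℝ) : |truncate b y| ≤ b := by
  unfold truncate
  split_ifs with h
  · exact h
  · simpa using hb

lemma sq_truncate_le {b α : ℝ} (hb : 0 ≤ b) (hα : α ≤ 1) (y : ℝ) :
    truncate b y ^ 2 ≤ b ^ (1 - α) * |y| ^ (1 + α) := by
  unfold truncate
  split_ifs with h
  · calc y ^ 2 = |y| ^ ((1 - α) + (1 + α)) := by
          rw [show (1 - α) + (1 + α) = (2 : ℕ) by ring, Real.rpow_natCast, sq_abs]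
      _ = |y| ^ (1 - α) * |y| ^ (1 + α) := Real.rpow_add' (abs_nonneg y) (by ring_nf; norm_num)
      _ ≤ b ^ (1 - α) * |y| ^ (1 + α) := by
          gcongr
  · rw [zero_pow two_ne_zero]
    exact mul_nonneg (Real.rpow_nonneg hb _) (Real.rpow_nonneg (abs_nonneg y) _)

section MainPart

variable {Ω : Type*} [MeasurableSpace Ω] (μ : Measure Ω) {X : ℕ → Ω → ℝ} {b : ℝ} {k : ℕ}

lemma mainPart_eq :
    mainPart μ X b k = fun ω => truncate b (X k ω) - ∫ ω', truncate b (X k ω') ∂μ := rfl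

lemma measurable_mainPart_comap :
    Measurable[MeasurableSpace.comap (X k) inferInstance] (mainPart μ X b k) :=
  ((measurable_truncate b).comp (comap_measurable (X k))).sub_const _

variable [IsProbabilityMeasure μ]

lemma memLp_truncate_comp (hX : Measurable (X k)) (hb : 0 ≤ b) (p : ENNReal) :
    MemLp (fun ω => truncate b (X k ω)) p μ :=
  .of_bound ((measurable_truncate b).comp hX).aestronglyMeasurable b
    (ae_of_all _ fun _ => abs_truncate_le hb _)

lemma memLp_mainPart (hX : Measurable (X k)) (hb : 0 ≤ b) (p : ENNReal) :
    MemLp (mainPart μ X b k) p μ :=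
  (memLp_truncate_comp μ hX hb p).sub (memLp_const _)

lemma integral_mainPart (hX : Measurable (X k)) (hb : 0 ≤ b) :
    ∫ ω, mainPart μ X b k ω ∂μ = 0 := by
  rw [mainPart_eq, integral_sub ((memLp_truncate_comp μ hX hb 1).integrable le_rfl)
    (integrable_const _), integral_const, probReal_univ, one_smul, sub_self]

lemma integral_mainPart_sq_le (hX : Measurable (X k)) (hb : 0 ≤ b) {α : ℝ} (hα : α ≤ 1)
    (hint : Integrable (fun ω => |X k ω| ^ (1 + α)) μ) :
    ∫ ω, mainPart μ X b k ω ^ 2 ∂μ ≤ b ^ (1 - α) * ∫ ω, |X k ω| ^ (1 + α) ∂μ := by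
  have hT := memLp_truncate_comp μ hX hb 2
  calc ∫ ω, mainPart μ X b k ω ^ 2 ∂μ = Var[fun ω => truncate b (X k ω); μ] :=
        (variance_eq_integral hT.aestronglyMeasurable.aemeasurable).symm
    _ ≤ ∫ ω, truncate b (X k ω) ^ 2 ∂μ := variance_le_expectation_sq hT.aestronglyMeasurable
    _ ≤ ∫ ω, b ^ (1 - α) * |X k ω| ^ (1 + α) ∂μ :=
        integral_mono hT.integrable_sq (hint.const_mul _) fun ω => sq_truncate_le hb hα _
    _ = b ^ (1 - α) * ∫ ω, |X k ω| ^ (1 + α) ∂μ := integral_const_mul _ _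

lemma abs_integral_mainPart_mul_le (hX : ∀ n, Measurable (X n)) (hb : 0 ≤ b) (hk : 1 ≤ k)
    (n : ℕ) {K : ℝ} (hK : ∫ ω, mainPart μ X b k ω ^ 2 ∂μ ≤ K)
    (hK' : ∫ ω, mainPart μ X b (k + n) ω ^ 2 ∂μ ≤ K) :
    |∫ ω, mainPart μ X b k ω * mainPart μ X b (k + n) ω ∂μ| ≤ 2 * √(phiCoef μ X n) * K := by
  have hmix := phiMixingLE_phiCoef μ (X := X) hk n
  have hf : Measurable[pastSigma X k] (mainPart μ X b k) :=
    (measurable_mainPart_comap μ).mono (le_iSup₂_of_le k ⟨hk, le_rfl⟩ le_rfl) le_rfl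
  have hg : Measurable[futureSigma X (k + n)] (mainPart μ X b (k + n)) :=
    (measurable_mainPart_comap μ).mono (le_iSup₂_of_le (k + n) Set.self_mem_Ici le_rfl) le_rfl
  have hcov := sq_integral_mul_sub_le (pastSigma_le hX k) (futureSigma_le hX _) hmix hf hg
    (memLp_mainPart μ (hX _) hb 2) (memLp_mainPart μ (hX _) hb 2)
  rw [integral_mainPart μ (hX k) hb, zero_mul, sub_zero] at hcov
  have hφ := hmix.nonneg
  have hK0 : 0 ≤ K := (integral_nonneg fun _ => sq_nonneg _).trans hK
  refine abs_le_of_sq_le_sq (hcov.trans ?_) (by positivity)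
  calc _ ≤ 4 * phiCoef μ X n * K * K := by gcongr
    _ = (2 * √(phiCoef μ X n) * K) ^ 2 := by rw [mul_pow, mul_pow, Real.sq_sqrt hφ]; ring

end MainPart

theorem block_second_moment_bound_general
    {Ω : Type*} [MeasurableSpace Ω] (μ : Measure Ω) [IsProbabilityMeasure μ]
    (X : ℕ → Ω → ℝ) (hmeas : ∀ n, Measurable (X n))
    (r C : ℝ) (hr : 2 < r)
    (hmix : ∀ m : ℕ, 1 ≤ m → phiCoef μ X m ≤ C * ((m : ℝ) + 1) ^ (-r))
    (α να : ℝ) (hα1 : α < 1)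
    (hint : ∀ n : ℕ, 1 ≤ n → Integrable (fun ω => |X n ω| ^ (1 + α)) μ)
    (hbdd : BddAbove (Set.range fun n : ℕ => ∫ ω, |X (n + 1) ω| ^ (1 + α) ∂μ))
    (hνα : να = ⨆ n : ℕ, ∫ ω, |X (n + 1) ω| ^ (1 + α) ∂μ)
    (φ : ℝ) (hφ : φ = phiSum μ X)
    (b : ℝ) (hb : 0 < b) :
    ∀ m i : ℕ, 1 ≤ m → 1 ≤ i →
      ∫ ω, (∑ j ∈ Finset.Icc 1 m, mainPart μ X b (i + j) ω) ^ 2 ∂μ ≤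
        m * να * (1 + 4 * φ) * b ^ (1 - α) := by
  intro m i _ _
  have hvar : ∀ k, 1 ≤ k → ∫ ω, mainPart μ X b k ω ^ 2 ∂μ ≤ να * b ^ (1 - α) := fun k hk => by
    obtain ⟨n, rfl⟩ := Nat.exists_eq_add_of_le' hk
    rw [mul_comm, hνα]
    exact (integral_mainPart_sq_le μ (hmeas _) hb.le hα1.le (hint _ hk)).trans
      (mul_le_mul_of_nonneg_left (le_ciSup hbdd n) (Real.rpow_nonneg hb.le _))
  have hblock := integral_sq_sum_le (Z := fun j => mainPart μ X b (i + j)) (S := Icc 1 m)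
    (fun j _ => memLp_mainPart μ (hmeas _) hb.le 2) (fun _ => Real.sqrt_nonneg _)
    (Summable.sqrt_of_le_rpow hr hmix) (fun j _ => hvar _ (by omega))
    fun j hj j' hj' hjj' => by
      have h := abs_integral_mainPart_mul_le μ hmeas hb.le (k := i + j) (by omega) (j' - j)
        (hvar _ (by omega)) (hvar _ (by omega))
      rwa [show i + j + (j' - j) = i + j' by omega, show j' - j = j' - j - 1 + 1 by omega] at h
  rw [hφ, phiSum]
  refine hblock.trans_eq ?_
  rw [Nat.card_Icc, Nat.add_sub_cancel]
  ring

/-- block second-moment bound in the proof of Theorem 1: for the main parts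
`Y_k = X_k·1(|X_k| ≤ b) - E(X_k·1(|X_k| ≤ b))`, any block sum `ξ = ∑_{j=1}^m Y_{i+j}`
satisfies `E(ξ²) ≤ m·να·(1+4φ)·b^{1-α}`, where `φ = ∑_{m≥1} φ(m)^{1/2}`. -/
theorem block_second_moment_bound
    {Ω : Type*} [MeasurableSpace Ω] (μ : Measure Ω) [IsProbabilityMeasure μ]
    (X : ℕ → Ω → ℝ) (hmeas : ∀ n, Measurable (X n))
    (r C : ℝ) (hr : 2 < r) (hC : 0 < C)
    (hmix : ∀ m : ℕ, 1 ≤ m → phiCoef μ X m ≤ C * ((m : ℝ) + 1) ^ (-r))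
    (α να : ℝ) (hα0 : 0 < α) (hα1 : α < 1)
    (hint : ∀ n : ℕ, 1 ≤ n → Integrable (fun ω => |X n ω| ^ (1 + α)) μ)
    (hbdd : BddAbove (Set.range fun n : ℕ => ∫ ω, |X (n + 1) ω| ^ (1 + α) ∂μ))
    (hνα : να = ⨆ n : ℕ, ∫ ω, |X (n + 1) ω| ^ (1 + α) ∂μ) (hνpos : 0 < να)
    (φ : ℝ) (hφ : φ = phiSum μ X)
    (b : ℝ) (hb : 0 < b) :
    ∀ m i : ℕ, 1 ≤ m → 1 ≤ i →
      ∫ ω, (∑ j ∈ Finset.Icc 1 m, mainPart μ X b (i + j) ω) ^ 2 ∂μ ≤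
        m * να * (1 + 4 * φ) * b ^ (1 - α) :=
  block_second_moment_bound_general μ X hmeas r C hr hmix α να hα1 hint hbdd hνα φ hφ b hb
end
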